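/- For any group G ⊆ I containing at least two agents and any d ∈ A*_G \ A^+_G, there exist atomic group actions a_0 ∈ A_{G_0}, …, a_m ∈ A_{G_m} with m > 0 such that {G_0, …, G_m} is a partial partition of G and →_d = ⋂_{0≤k≤m} →_{a_k}. -/

import Mathlib

namespace DKH

/-- Groups of agents: subsets of the finite agent set `I = {i_0, …, i_{n-1}}`. -/
abbrev Grp (n : ℕ) := Finset (Fin n)

/-- The language DKH: φ ::= ⊤ | p | ¬φ | (φ∧φ) | K_G φ | Kh_G φ. -/
inductive Formula (P : Type) (n : ℕ) : Type
  | top  : Formula P n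
  | atom : P → Formula P n
  | neg  : Formula P n → Formula P n
  | and  : Formula P n → Formula P n → Formula P n
  | K    : Grp n → Formula P n → Formula P n
  | Kh   : Grp n → Formula P n → Formula P n

instance {P n} : Inhabited (Formula P n) := ⟨.top⟩

namespace Formula
/-- Defined implication φ → ψ := ¬(φ ∧ ¬ψ). -/
def imp {P n} (φ ψ : Formula P n) : Formula P n := .neg (φ.and ψ.neg)
/-- Defined falsum ⊥ := ¬⊤. -/
def bot {P : Type} {n : ℕ} : Formula P n := .neg .top
end Formula

/-- A model ⟨S, {∼_i}, {A_G}, {→_a}, V⟩. -/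
structure KhModel (P : Type) (n : ℕ) where
  State : Type
  Act : Type
  sim : Fin n → State → State → Prop
  sim_equiv : ∀ i, Equivalence (sim i)
  A : Grp n → Set Act
  A_empty : A ∅ = ∅
  A_disj : ∀ G H : Grp n, G ⊂ H → A G ∩ A H = ∅
  tr : Act → State → State → Prop
  V : P → Set State

/-- Distributed indistinguishability: s ∼_G t iff s ∼_i t for every i ∈ G. -/
def gsim {P n} (M : KhModel P n) (G : Grp n) (s t : M.State) : Prop :=
  ∀ i ∈ G, M.sim i s t

/-- Distributed actions: atomic group actions, or joint tuples ⟨d_0,…,d_k⟩. -/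
inductive DAct (Act : Type) : Type
  | atom : Act → DAct Act
  | joint : List (DAct Act) → DAct Act

mutual
/-- Distributed transition relation: →_{⟨d_0,…,d_k⟩} = ⋂_j →_{d_j}. -/
def dtr {Act State : Type} (tr : Act → State → State → Prop) :
    DAct Act → State → State → Prop
  | .atom a, s, t => tr a s t
  | .joint ds, s, t => dtrList tr ds s t

def dtrList {Act State : Type} (tr : Act → State → State → Prop) :
    List (DAct Act) → State → State → Prop
  | [], _, _ => True
  | d :: ds, s, t => dtr tr d s t ∧ dtrList tr ds s t
end

/-- `Gs` is a partial partition of `G`: a family of nonempty, pairwise disjoint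
blocks, all included in `G` (i.e. a partition of a subset of `G`). -/
def PartialPartition {n : ℕ} (G : Grp n) (Gs : List (Grp n)) : Prop :=
  (∀ B ∈ Gs, B ≠ ∅) ∧ Gs.Pairwise (fun B C => Disjoint B C) ∧ (∀ B ∈ Gs, B ⊆ G)

/-- The fixed ordering on mutually disjoint nonempty groups: G ≺ H iff the
minimal index of an agent in G is below that of H. -/
def grpLt {n : ℕ} (B C : Grp n) : Prop := B.min < C.min

/-- Membership in the set A*_G of distributed actions of group G:
the closure of A^+_G = ⋃_{G'⊆G} A_{G'} under forming joint actions
⟨d_0,…,d_k⟩ ∈ A*_{G_0} × ⋯ × A*_{G_k} for non-trivial partial partitions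
{G_0,…,G_k} of G listed in the fixed order ≺. -/
inductive star {n : ℕ} {Act : Type} (A : Grp n → Set Act) : Grp n → DAct Act → Prop
  | base {G G' : Grp n} {a : Act} :
      G' ⊆ G → a ∈ A G' → star A G (.atom a)
  | joint {G : Grp n} {Gs : List (Grp n)} {ds : List (DAct Act)} :
      2 ≤ Gs.length → PartialPartition G Gs → Gs.Chain' grpLt →
      List.Forall₂ (star A) Gs ds → star A G (.joint ds)

/-- Membership in A^+_G = ⋃_{G'⊆G} A_{G'} (as a set of distributed actions). -/
def inAplus {n : ℕ} {Act : Type} (A : Grp n → Set Act) (G : Grp n) (d : DAct Act) : Prop :=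
  ∃ G' : Grp n, G' ⊆ G ∧ ∃ a ∈ A G', d = .atom a

/-- d is executable on X if every s ∈ X has a d-successor. -/
def ExecutableOn {P n} (M : KhModel P n) (d : DAct M.Act) (X : Set M.State) : Prop :=
  ∀ s ∈ X, ∃ t, dtr M.tr d s t

/-- A strategy of group G: a partial function from ∼_G-equivalence classes to
A*_G such that the prescribed action is executable on the class. -/
structure Strategy {P n} (M : KhModel P n) (G : Grp n) where
  act : M.State → Option (DAct M.Act)
  uniform : ∀ s t, gsim M G s t → act s = act t
  mem_star : ∀ s d, act s = some d → star M.A G d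
  exec : ∀ s d, act s = some d → ∀ t, gsim M G s t → ∃ u, dtr M.tr d t u

/-- One step of an execution: [s]_G →_{σ([s]_G)} [t]_G. -/
def stepRel {P n} {M : KhModel P n} {G : Grp n} (σ : Strategy M G) (s t : M.State) : Prop :=
  ∃ d, σ.act s = some d ∧ ∃ u v, gsim M G s u ∧ gsim M G t v ∧ dtr M.tr d u v

/-- Leaf-nodes of the finite complete executions of σ starting from [s]_G,
as a ∼_G-closed set of states. -/
def CELeaf {P n} {M : KhModel P n} {G : Grp n} (σ : Strategy M G) (s : M.State) :
    Set M.State :=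
  {t | ∃ (m : ℕ) (f : ℕ → M.State), gsim M G s (f 0) ∧
    (∀ j < m, stepRel σ (f j) (f (j+1))) ∧ σ.act (f m) = none ∧ gsim M G (f m) t}

/-- There is an infinite (hence complete) execution of σ starting from [s]_G. -/
def InfiniteFrom {P n} {M : KhModel P n} {G : Grp n} (σ : Strategy M G) (s : M.State) : Prop :=
  ∃ f : ℕ → M.State, gsim M G s (f 0) ∧ ∀ j, stepRel σ (f j) (f (j+1))

/-- Inner-nodes of the complete executions of σ starting from [s]_G,
as a ∼_G-closed set of states. -/
def CEInner {P n} {M : KhModel P n} {G : Grp n} (σ : Strategy M G) (s : M.State) :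
    Set M.State :=
  {t | (∃ (m : ℕ) (f : ℕ → M.State), gsim M G s (f 0) ∧
          (∀ j < m, stepRel σ (f j) (f (j+1))) ∧ σ.act (f m) = none ∧
          ∃ j < m, gsim M G (f j) t) ∨
       (∃ f : ℕ → M.State, gsim M G s (f 0) ∧
          (∀ j, stepRel σ (f j) (f (j+1))) ∧ ∃ j, gsim M G (f j) t)}

/-- Truth at a pointed model. -/
def Sat {P n} (M : KhModel P n) : M.State → Formula P n → Prop
  | _, .top => True
  | s, .atom p => s ∈ M.V p
  | s, .neg φ => ¬ Sat M s φ
  | s, .and φ ψ => Sat M s φ ∧ Sat M s ψ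
  | s, .K G φ => ∀ t, gsim M G s t → Sat M t φ
  | s, .Kh G φ => ∃ σ : Strategy M G,
      (∀ t ∈ CELeaf σ s, Sat M t φ) ∧ ¬ InfiniteFrom σ s

/-- Boolean evaluation treating ⊤, ¬, ∧ as connectives and everything else
as atoms; used to define propositional tautologies. -/
def beval {P n} (v : Formula P n → Bool) : Formula P n → Bool
  | .top => true
  | .atom p => v (.atom p)
  | .neg φ => !(beval v φ)
  | .and φ ψ => beval v φ && beval v ψ
  | .K G φ => v (.K G φ)
  | .Kh G φ => v (.Kh G φ)

/-- Instances of propositional tautologies. -/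
def IsTaut {P n} (φ : Formula P n) : Prop := ∀ v, beval v φ = true

/-- The proof system SDKH. -/
inductive Provable {P : Type} {n : ℕ} : Formula P n → Prop
  | taut {φ} : IsTaut φ → Provable φ
  | distK {G : Grp n} {φ ψ} :
      Provable (((Formula.K G φ).and (Formula.K G (φ.imp ψ))).imp (Formula.K G ψ))
  | axT {G : Grp n} {φ} : Provable ((Formula.K G φ).imp φ)
  | ax4 {G : Grp n} {φ} : Provable ((Formula.K G φ).imp (Formula.K G (Formula.K G φ)))
  | ax5 {G : Grp n} {φ} :
      Provable ((Formula.neg (Formula.K G φ)).imp (Formula.K G (Formula.neg (Formula.K G φ))))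
  | axKMono {G H : Grp n} {φ} : G ⊆ H → Provable ((Formula.K G φ).imp (Formula.K H φ))
  | axKhMono {G H : Grp n} {φ} : G ⊆ H → Provable ((Formula.Kh G φ).imp (Formula.Kh H φ))
  | axKtoKh {G : Grp n} {φ} : Provable ((Formula.K G φ).imp (Formula.Kh G φ))
  | axEmpKhtoK {φ} : Provable ((Formula.Kh ∅ φ).imp (Formula.K ∅ φ))
  | axKhtoKKh {G : Grp n} {φ} : Provable ((Formula.Kh G φ).imp (Formula.K G (Formula.Kh G φ)))
  | axEmpMono {G : Grp n} {φ ψ} :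
      Provable ((Formula.K ∅ (φ.imp ψ)).imp (Formula.K ∅ ((Formula.Kh G φ).imp (Formula.Kh G ψ))))
  | axKhbot {G : Grp n} : Provable ((Formula.Kh G Formula.bot).imp Formula.bot)
  | axKhtoKhK {G : Grp n} {φ} : Provable ((Formula.Kh G φ).imp (Formula.Kh G (Formula.K G φ)))
  | axKhKh {G : Grp n} {φ} : Provable ((Formula.Kh G (Formula.Kh G φ)).imp (Formula.Kh G φ))
  | mp {φ ψ} : Provable (φ.imp ψ) → Provable φ → Provable ψ
  | necK {G : Grp n} {φ} : Provable φ → Provable (Formula.K G φ)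

/-- Conjunction of a finite list of formulas. -/
def conj {P n} (L : List (Formula P n)) : Formula P n := L.foldr Formula.and Formula.top

/-- SDKH-consistency of a set of formulas. -/
def Consistent {P n} (X : Set (Formula P n)) : Prop :=
  ¬ ∃ L : List (Formula P n), (∀ φ ∈ L, φ ∈ X) ∧ Provable ((conj L).imp Formula.bot)

/-- Maximal consistent sets. -/
def MCS {P n} (X : Set (Formula P n)) : Prop :=
  Consistent X ∧ ∀ φ ∉ X, ¬ Consistent (insert φ X)

/-! ### The canonical model -/

/-- One step ⟨(φ,G),H⟩X of a mixed sequence. -/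
structure CStep (P : Type) (n : ℕ) where
  fml : Formula P n
  G : Grp n
  H : Grp n
  X : Set (Formula P n)

instance {P n} : Inhabited (CStep P n) := ⟨⟨.top, ∅, ∅, ∅⟩⟩

/-- The conditions on a mixed sequence X_0⟨(φ_1,G_1),H_1⟩X_1⋯⟨(φ_n,G_n),H_n⟩X_n
(the previous MCS being `X`). -/
def goodFrom {P n} : Set (Formula P n) → List (CStep P n) → Prop
  | _, [] => True
  | X, c :: rest =>
      MCS c.X ∧ c.G ≠ ∅ ∧ (Formula.Kh c.G c.fml) ∈ X ∧ (Formula.K c.G c.fml) ∈ c.X ∧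
      (∀ ψ, (Formula.K c.H ψ) ∈ X → ψ ∈ c.X) ∧ goodFrom c.X rest

/-- The final MCS `ed(s)` of a mixed sequence. -/
def edOf {P n} (X0 : Set (Formula P n)) (l : List (CStep P n)) : Set (Formula P n) :=
  l.foldl (fun _ c => c.X) X0

/-- States of the canonical model: mixed sequences starting at X_0. -/
def CState {P : Type} {n : ℕ} (X0 : Set (Formula P n)) := {l : List (CStep P n) // goodFrom X0 l}

/-- Canonical epistemic relation ∼^c_i. -/
def csim {P n} (X0 : Set (Formula P n)) (i : Fin n) (s t : CState X0) : Prop :=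
  ∃ k : ℕ, k ≤ s.1.length ∧ k ≤ t.1.length ∧
    (∀ j < k, (s.1.getD j default).X = (t.1.getD j default).X ∧
              (s.1.getD j default).H = (t.1.getD j default).H) ∧
    (∀ j, k ≤ j → j < s.1.length → i ∈ (s.1.getD j default).H) ∧
    (∀ j, k ≤ j → j < t.1.length → i ∈ (t.1.getD j default).H)

/-- Canonical atomic actions: pairs (φ, G). -/
abbrev CAct (P : Type) (n : ℕ) := Formula P n × Grp n

/-- Canonical atomic action sets A^c_G = {(φ,G) : φ ∈ DKH} for G ≠ ∅, A^c_∅ = ∅. -/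
def cA {P : Type} {n : ℕ} (G : Grp n) : Set (CAct P n) := {a | a.2 = G ∧ G ≠ ∅}

/-- Canonical transition: s →_{(φ,G)} t iff t = s⟨(φ,G),G'⟩X for some G' and MCS X. -/
def ctr {P n} (X0 : Set (Formula P n)) (a : CAct P n) (s t : CState X0) : Prop :=
  ∃ (G' : Grp n) (Y : Set (Formula P n)), MCS Y ∧ t.1 = s.1 ++ [⟨a.1, a.2, G', Y⟩]

theorem csim_equiv {P n} (X0 : Set (Formula P n)) (i : Fin n) : Equivalence (csim X0 i) := by
  constructor
  · intro s
    exact ⟨s.1.length, le_rfl, le_rfl, fun j _ => ⟨rfl, rfl⟩,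
      fun j h1 h2 => absurd h2 (by omega), fun j h1 h2 => absurd h2 (by omega)⟩
  · rintro s t ⟨k, h1, h2, h3, h4, h5⟩
    exact ⟨k, h2, h1, fun j hj => ⟨(h3 j hj).1.symm, (h3 j hj).2.symm⟩, h5, h4⟩
  · rintro s t u ⟨k1, hk1s, hk1t, heq1, hs1, ht1⟩ ⟨k2, hk2t, hk2u, heq2, ht2, hu2⟩
    refine ⟨min k1 k2, le_trans (min_le_left _ _) hk1s, le_trans (min_le_right _ _) hk2u,
      ?_, ?_, ?_⟩
    · intro j hj
      have e1 := heq1 j (lt_of_lt_of_le hj (min_le_left _ _))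
      have e2 := heq2 j (lt_of_lt_of_le hj (min_le_right _ _))
      exact ⟨e1.1.trans e2.1, e1.2.trans e2.2⟩
    · intro j hj hjs
      by_cases h : k1 ≤ j
      · exact hs1 j h hjs
      · have hj2 : k2 ≤ j := by omega
        have hjt : j < t.1.length := by omega
        have := ht2 j hj2 hjt
        have e := (heq1 j (by omega)).2
        rw [e]; exact this
    · intro j hj hju
      by_cases h : k2 ≤ j
      · exact hu2 j h hju
      · have hj1 : k1 ≤ j := by omega
        have hjt : j < t.1.length := by omega
        have := ht1 j hj1 hjt
        have e := (heq2 j (by omega)).2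
        rw [← e]; exact this

theorem cA_empty {P : Type} {n : ℕ} : (cA (P := P) (n := n) ∅) = ∅ := by
  ext a; simp [cA]

theorem cA_disj {P : Type} {n : ℕ} (G H : Grp n) (h : G ⊂ H) :
    cA (P := P) (n := n) G ∩ cA H = ∅ := by
  ext a
  simp only [Set.mem_inter_iff, Set.mem_empty_iff_false, iff_false, cA, Set.mem_setOf_eq]
  rintro ⟨⟨rfl, -⟩, ⟨h2, -⟩⟩
  exact h.ne h2

/-- The canonical model M^c(X_0). -/
def canonicalModel {P : Type} {n : ℕ} (X0 : Set (Formula P n)) : KhModel P n where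
  State := CState X0
  Act := CAct P n
  sim := csim X0
  sim_equiv := csim_equiv X0
  A := cA
  A_empty := cA_empty
  A_disj := cA_disj
  tr := ctr X0
  V := fun p => {s : CState X0 | Formula.atom p ∈ edOf X0 s.1}

/-!
Flattening a distributed action into the list of its atomic components turns `→_d` into the
intersection of the atomic transition relations. The groups witnessing `d ∈ A*_G` refine one
another, so the groups of these atoms form a partial partition of `G` (with nonempty blocks
because `A_∅ = ∅`). An action outside `A^+_G` is a joint action with at least two components,
each of which contributes at least one atom.
-/

namespace DAct

variable {Act : Type}

mutual
def atoms : DAct Act → List Act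
  | .atom a => [a]
  | .joint ds => atomsList ds

def atomsList : List (DAct Act) → List Act
  | [] => []
  | d :: ds => atoms d ++ atomsList ds
end

end DAct

open DAct

variable {Act State : Type}

mutual
theorem dtr_iff_forall_mem_atoms (tr : Act → State → State → Prop) (s t : State) :
    ∀ d : DAct Act, dtr tr d s t ↔ ∀ a ∈ d.atoms, tr a s t
  | .atom a => by simp [dtr, atoms]
  | .joint ds => by
      rw [dtr, atoms]
      exact dtrList_iff_forall_mem_atomsList tr s t ds

theorem dtrList_iff_forall_mem_atomsList (tr : Act → State → State → Prop) (s t : State) :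
    ∀ ds : List (DAct Act), dtrList tr ds s t ↔ ∀ a ∈ atomsList ds, tr a s t
  | [] => by simp [dtrList, atomsList]
  | d :: ds => by
      rw [dtrList, atomsList, dtr_iff_forall_mem_atoms tr s t d,
        dtrList_iff_forall_mem_atomsList tr s t ds]
      simp only [List.mem_append, or_imp, forall_and]
end

namespace PartialPartition

variable {n : ℕ} {G H : Grp n} {Bs Cs : List (Grp n)}

theorem nil (G : Grp n) : PartialPartition G [] := by
  simp [PartialPartition]

theorem singleton {B : Grp n} (hB : B ≠ ∅) (hBG : B ⊆ G) : PartialPartition G [B] := by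
  simp [PartialPartition, hB, hBG]

theorem mono (hGH : G ⊆ H) (h : PartialPartition G Bs) : PartialPartition H Bs :=
  ⟨h.1, h.2.1, fun B hB => (h.2.2 B hB).trans hGH⟩

theorem append (hGH : Disjoint G H) (hG : PartialPartition G Bs) (hH : PartialPartition H Cs) :
    PartialPartition (G ∪ H) (Bs ++ Cs) := by
  refine ⟨?_, List.pairwise_append.2 ⟨hG.2.1, hH.2.1, ?_⟩, ?_⟩
  · simpa [or_imp, forall_and] using And.intro hG.1 hH.1
  · exact fun B hB C hC => (hGH.mono_left (hG.2.2 B hB)).mono_right (hH.2.2 C hC)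
  · simpa [or_imp, forall_and] using
      And.intro (fun B hB => (hG.2.2 B hB).trans Finset.subset_union_left)
        (fun C hC => (hH.2.2 C hC).trans Finset.subset_union_right)

end PartialPartition

def AtomsOfPartialPartition {n : ℕ} (A : Grp n → Set Act) (G : Grp n) (as : List Act) : Prop :=
  ∃ Bs, PartialPartition G Bs ∧ List.Forall₂ (fun B a => a ∈ A B) Bs as

namespace AtomsOfPartialPartition

variable {n : ℕ} {A : Grp n → Set Act} {G H : Grp n} {as bs : List Act}

theorem nil (A : Grp n → Set Act) (G : Grp n) : AtomsOfPartialPartition A G [] :=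
  ⟨[], .nil G, .nil⟩

theorem singleton (hA : A ∅ = ∅) {B : Grp n} {a : Act} (hBG : B ⊆ G) (ha : a ∈ A B) :
    AtomsOfPartialPartition A G [a] := by
  refine ⟨[B], .singleton ?_ hBG, .cons ha .nil⟩
  rintro rfl
  simp [hA] at ha

theorem mono (hGH : G ⊆ H) (h : AtomsOfPartialPartition A G as) :
    AtomsOfPartialPartition A H as :=
  let ⟨Bs, hBs, hmem⟩ := h
  ⟨Bs, hBs.mono hGH, hmem⟩

theorem append (hGH : Disjoint G H) (hG : AtomsOfPartialPartition A G as)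
    (hH : AtomsOfPartialPartition A H bs) : AtomsOfPartialPartition A (G ∪ H) (as ++ bs) :=
  let ⟨Bs, hBs, hmemB⟩ := hG
  let ⟨Cs, hCs, hmemC⟩ := hH
  ⟨Bs ++ Cs, hBs.append hGH hCs, List.rel_append hmemB hmemC⟩

end AtomsOfPartialPartition

section star

variable {n : ℕ} {A : Grp n → Set Act}

open AtomsOfPartialPartition in
mutual
theorem star.atomsOfPartialPartition (hA : A ∅ = ∅) {G : Grp n} :
    ∀ {d : DAct Act}, star A G d → AtomsOfPartialPartition A G d.atoms
  | _, .base hsub ha => singleton hA hsub ha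
  | _, .joint _ hpp _ hF => by
      rw [atoms]
      refine (forall₂_star_atomsOfPartialPartition hA hF hpp.2.1).mono ?_
      exact Finset.biUnion_subset.2 fun B hB => hpp.2.2 B (List.mem_toFinset.1 hB)

theorem forall₂_star_atomsOfPartialPartition (hA : A ∅ = ∅) :
    ∀ {Gs : List (Grp n)} {ds : List (DAct Act)}, List.Forall₂ (star A) Gs ds →
      Gs.Pairwise Disjoint → AtomsOfPartialPartition A (Gs.toFinset.biUnion id) (atomsList ds)
  | _, _, .nil, _ => by simpa [atomsList] using nil A ∅
  | B :: Gs, _, .cons hd hF, hpw => by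
      rw [atomsList, List.toFinset_cons, Finset.biUnion_insert]
      obtain ⟨hB, hpw⟩ := List.pairwise_cons.1 hpw
      refine (star.atomsOfPartialPartition hA hd).append ?_
        (forall₂_star_atomsOfPartialPartition hA hF hpw)
      exact (Finset.disjoint_biUnion_right _ _ _).2 fun C hC => hB C (List.mem_toFinset.1 hC)
end

theorem star.atoms_ne_nil {G : Grp n} : ∀ {d : DAct Act}, star A G d → d.atoms ≠ []
  | _, .base _ _ => List.cons_ne_nil _ _
  | _, .joint hlen _ _ .nil => absurd hlen (by simp)
  | _, .joint _ _ _ (.cons hd _) => by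
      rw [atoms, atomsList]
      exact List.append_ne_nil_of_left_ne_nil (star.atoms_ne_nil hd) _

theorem star.length_le_length_atomsList {Gs : List (Grp n)} :
    ∀ {ds : List (DAct Act)}, List.Forall₂ (star A) Gs ds → ds.length ≤ (atomsList ds).length
  | _, .nil => le_rfl
  | _, .cons hd hF => by
      have hpos := List.length_pos_iff.2 (star.atoms_ne_nil hd)
      have ih := star.length_le_length_atomsList hF
      rw [atomsList, List.length_append, List.length_cons]
      omega

end star

/-- For any group G containing at least two agents and any
d ∈ A*_G \ A^+_G, there exist atomic group actions a_0 ∈ A_{G_0}, …, a_m ∈ A_{G_m}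
with m > 0 such that {G_0,…,G_m} is a partial partition of G and
→_d = ⋂_{0≤k≤m} →_{a_k}. -/
theorem dtr_eq_inter_of_atoms_nontrivial {P : Type} [Countable P] {n : ℕ}
    (M : KhModel P n) (G : Grp n) (hG : 1 < G.card) (d : DAct M.Act)
    (hd : star M.A G d) (hnp : ¬ inAplus M.A G d) :
    ∃ (Gs : List (Grp n)) (as : List M.Act), 2 ≤ as.length ∧
      PartialPartition G Gs ∧
      List.Forall₂ (fun B a => a ∈ M.A B) Gs as ∧
      (∀ s t : M.State, dtr M.tr d s t ↔ ∀ a ∈ as, M.tr a s t) := by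
  obtain ⟨Gs, hGs, hmem⟩ := hd.atomsOfPartialPartition M.A_empty
  refine ⟨Gs, d.atoms, ?_, hGs, hmem, fun s t => dtr_iff_forall_mem_atoms M.tr s t d⟩
  cases hd with
  | base hsub ha => exact absurd ⟨_, hsub, _, ha, rfl⟩ hnp
  | joint hlen _ _ hF =>
      rw [atoms]
      exact (hF.length_eq ▸ hlen).trans (star.length_le_length_atomsList hF)

end DKH
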